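/- arXiv:1507.00765 — 5 statements merged into one kernel-verified Lean document; each statement's English description precedes it below -/
import Mathlib

section
/- Let n ≥ 3, let a < b be real numbers, and let f : [a,b] → ℝ be a concave function with f(t) > 0 for all t ∈ [a,b]. Define the convex body of revolution K_f = {x ∈ ℝⁿ : x₁ ∈ [a,b] and x₂² + ⋯ + x_n² ≤ f(x₁)²}. Let P₂(K_f) ⊂ ℝ^{n−1} and P₃(K_f) ⊂ ℝ^{n−1} be the images of K_f under deleting the 2nd, respectively 3rd, coordinate, and let P_{23}(K_f) ⊂ ℝ^{n−2} be the image under deleting both the 2nd and 3rd coordinates. Then (n/(n−1)) · vol_{n−2}(P_{23}(K_f)) · vol_n(K_f) > vol_{n−1}(P₂(K_f)) · vol_{n−1}(P₃(K_f)). -/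
open MeasureTheory

/-- Coordinate projection deleting the coordinate of index `i` (0-based). -/
noncomputable def delCoord {n : ℕ} (i : Fin n) (x : EuclideanSpace ℝ (Fin n)) :
    EuclideanSpace ℝ (Fin (n - 1)) :=
  WithLp.toLp 2 fun j => if (j : ℕ) < (i : ℕ) then x ⟨j, by have := j.2; omega⟩
    else x ⟨(j : ℕ) + 1, by have := j.2; omega⟩

/-- Coordinate projection deleting the two coordinates of indices 1 and 2 (0-based),
i.e. the 2nd and 3rd coordinates. -/
noncomputable def delCoord23 {n : ℕ} (x : EuclideanSpace ℝ (Fin n)) :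
    EuclideanSpace ℝ (Fin (n - 2)) :=
  WithLp.toLp 2 fun j => if (j : ℕ) < 1 then x ⟨j, by have := j.2; omega⟩
    else x ⟨(j : ℕ) + 2, by have := j.2; omega⟩

/-- The body of revolution `K_f = {x : x₁ ∈ [a,b], x₂²+⋯+x_n² ≤ f(x₁)²}`. -/
def bodyOfRevolution (n : ℕ) (hn : 0 < n) (a b : ℝ) (f : ℝ → ℝ) :
    Set (EuclideanSpace ℝ (Fin n)) :=
  {x | x ⟨0, hn⟩ ∈ Set.Icc a b ∧
    ∑ i ∈ Finset.univ.filter (fun i : Fin n => 0 < (i : ℕ)), (x i) ^ 2 ≤ (f (x ⟨0, hn⟩)) ^ 2}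

/-! Deleting any coordinate other than the first maps `K_f ⊂ ℝⁿ` onto `K_f ⊂ ℝⁿ⁻¹`, so all four
volumes are volumes of bodies of revolution, and by Fubini `vol_{k+1}(K_f) = ω_k ∫ f^k` with `ω_k`
the volume of the unit `k`-ball. The inequality then splits into the Cauchy–Schwarz inequality
`(∫ f^{k+1})² ≤ ∫ f^k · ∫ f^{k+2}` and the strict inequality `ω_{k+1}² < (k+3)/(k+2) · ω_k ω_{k+2}`,
which is strict log-convexity of `Γ` along half-integer steps. Concavity makes `f` continuous on
`(a, b)` and bounded between positive constants, so the integrals are finite and positive. -/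

open Real Set Metric
open scoped ENNReal

namespace Real

theorem Gamma_sq_le_mul_Gamma {x : ℝ} (hx : 1 / 2 < x) :
    Gamma x ^ 2 ≤ Gamma (x - 1 / 2) * Gamma (x + 1 / 2) := by
  have h := Gamma_mul_add_mul_le_rpow_Gamma_mul_rpow_Gamma (a := 1 / 2) (b := 1 / 2)
    (s := x - 1 / 2) (t := x + 1 / 2) (by linarith) (by linarith) (by norm_num) (by norm_num)
    (by norm_num)
  rw [show 1 / 2 * (x - 1 / 2) + 1 / 2 * (x + 1 / 2) = x by ring,
    ← mul_rpow (Gamma_pos_of_pos (by linarith)).le (Gamma_pos_of_pos (by linarith)).le,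
    ← sqrt_eq_rpow] at h
  exact (le_sqrt (Gamma_pos_of_pos (by linarith)).le (by positivity)).1 h

/-- Strictness comes from applying the non-strict inequality one step further right and
`Γ(s + 1) = s Γ(s)`: the factor lost is `x (x + 1) / (x + 1/2)² < 1`. -/
theorem Gamma_add_half_sq_lt_mul_Gamma {x : ℝ} (hx : 0 < x) :
    Gamma (x + 1 / 2) ^ 2 < Gamma x * Gamma (x + 1) := by
  have h := Gamma_sq_le_mul_Gamma (x := x + 1 / 2 + 1) (by linarith)
  rw [show x + 1 / 2 + 1 - 1 / 2 = x + 1 by ring, show x + 1 / 2 + 1 + 1 / 2 = x + 1 + 1 by ring,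
    Gamma_add_one (by positivity : x + 1 / 2 ≠ 0), Gamma_add_one (by positivity : x + 1 ≠ 0)] at h
  rw [Gamma_add_one hx.ne'] at h ⊢
  by_contra! hc
  have hx0 := Gamma_pos_of_pos hx
  nlinarith [mul_le_mul_of_nonneg_left hc (sq_nonneg (x + 1 / 2)), mul_pos hx (mul_pos hx0 hx0)]

end Real

noncomputable def unitBallVolume (k : ℕ) : ℝ := √π ^ k / Gamma (k / 2 + 1)

theorem unitBallVolume_pos (k : ℕ) : 0 < unitBallVolume k :=
  div_pos (pow_pos (sqrt_pos.2 pi_pos) k) (Gamma_pos_of_pos (by positivity))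

theorem unitBallVolume_sq_lt (k : ℕ) :
    unitBallVolume (k + 1) ^ 2 <
      ((k + 3) / (k + 2)) * unitBallVolume k * unitBallVolume (k + 2) := by
  set x : ℝ := k / 2 + 1
  have hx : 0 < x := by positivity
  have hΓ := Gamma_add_half_sq_lt_mul_Gamma (x := x + 1 / 2) (by positivity)
  rw [show x + 1 / 2 + 1 / 2 = x + 1 by ring, Gamma_add_one hx.ne',
    show x + 1 / 2 + 1 = (x + 1 / 2) + 1 by ring, Gamma_add_one (by positivity : x + 1 / 2 ≠ 0)]
    at hΓ
  have hπ : (√π ^ (k + 1)) ^ 2 = √π ^ k * √π ^ (k + 2) := by ring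
  simp only [unitBallVolume]
  push_cast
  rw [show ((k : ℝ) + 1) / 2 + 1 = x + 1 / 2 by ring, show ((k : ℝ) + 2) / 2 + 1 = x + 1 by ring,
    Gamma_add_one hx.ne', show (k : ℝ) / 2 + 1 = x from rfl, div_pow, hπ]
  have hk : ((k : ℝ) + 3) / (k + 2) = (x + 1 / 2) / x := by
    rw [div_eq_div_iff (by positivity) hx.ne']; ring
  have hA : 0 < √π ^ k * √π ^ (k + 2) := by positivity
  rw [hk, show (x + 1 / 2) / x * (√π ^ k / Gamma x) * (√π ^ (k + 2) / (x * Gamma x))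
      = (x + 1 / 2) * (√π ^ k * √π ^ (k + 2)) / (x * Gamma x) ^ 2 by field_simp,
    div_lt_div_iff₀ (by positivity) (by positivity)]
  nlinarith [mul_lt_mul_of_pos_left hΓ hA]

theorem unitBallVolume_mul_sq_lt (k : ℕ) {j₀ j₁ j₂ : ℝ} (hj₀ : 0 < j₀) (hj₂ : 0 < j₂)
    (hj : j₁ ^ 2 ≤ j₀ * j₂) :
    (unitBallVolume (k + 1) * j₁) ^ 2 <
      (k + 3) / (k + 2) * (unitBallVolume k * j₀) * (unitBallVolume (k + 2) * j₂) :=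
  calc (unitBallVolume (k + 1) * j₁) ^ 2 ≤ unitBallVolume (k + 1) ^ 2 * (j₀ * j₂) := by
        rw [mul_pow]; gcongr
    _ < (k + 3) / (k + 2) * unitBallVolume k * unitBallVolume (k + 2) * (j₀ * j₂) := by
        gcongr; exact unitBallVolume_sq_lt k
    _ = _ := by ring

theorem EuclideanSpace.volume_closedBall_fin (k : ℕ) {r : ℝ} (hr : 0 ≤ r) :
    volume (closedBall (0 : EuclideanSpace ℝ (Fin k)) r) =
      ENNReal.ofReal r ^ k * ENNReal.ofReal (unitBallVolume k) := by
  rcases k with _ | k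
  · simp [volume_euclideanSpace_eq_dirac, unitBallVolume, mem_closedBall_self hr]
  · simpa [unitBallVolume] using EuclideanSpace.volume_closedBall (Fin (k + 1)) 0 r

theorem volume_prod_setOf_norm_le {E : Type*} [NormedAddCommGroup E] [MeasurableSpace E]
    [OpensMeasurableSpace E] (ν : Measure E) [SFinite ν] {I : Set ℝ} (hI : MeasurableSet I)
    {g : ℝ → ℝ} (hg : ContinuousOn g I) :
    (volume.prod ν) {p : ℝ × E | p.1 ∈ I ∧ ‖p.2‖ ≤ |g p.1|} =
      ∫⁻ t in I, ν (closedBall 0 |g t|) := by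
  classical
  have hmeas : MeasurableSet {p : ℝ × E | p.1 ∈ I ∧ ‖p.2‖ ≤ |I.piecewise g 0 p.1|} :=
    (hI.preimage measurable_fst).inter <| measurableSet_le (by fun_prop)
      ((hg.measurable_piecewise continuousOn_const hI).abs.comp measurable_fst)
  have hset : {p : ℝ × E | p.1 ∈ I ∧ ‖p.2‖ ≤ |g p.1|} =
      {p : ℝ × E | p.1 ∈ I ∧ ‖p.2‖ ≤ |I.piecewise g 0 p.1|} := by
    ext p
    simp +contextual
  rw [hset, Measure.prod_apply hmeas, ← lintegral_indicator hI]
  congr 1 with t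
  by_cases ht : t ∈ I
  · simp [ht, closedBall, Set.preimage]
  · simp [ht]

theorem setOf_fst_mem_ae_eq {E : Type*} [MeasurableSpace E] (ν : Measure E) {I J : Set ℝ}
    (hIJ : I =ᵐ[volume] J) (R : ℝ × E → Prop) :
    {p : ℝ × E | p.1 ∈ I ∧ R p} =ᵐ[volume.prod ν] {p : ℝ × E | p.1 ∈ J ∧ R p} :=
  (Measure.quasiMeasurePreserving_fst.preimage_ae_eq hIJ).inter (Filter.EventuallyEq.refl _ _)

namespace EuclideanSpace

noncomputable def measurableEquivFinSucc (k : ℕ) :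
    EuclideanSpace ℝ (Fin (k + 1)) ≃ᵐ ℝ × EuclideanSpace ℝ (Fin k) :=
  (MeasurableEquiv.toLp 2 _).symm.trans <| (MeasurableEquiv.piFinSuccAbove (fun _ => ℝ) 0).trans <|
    (MeasurableEquiv.refl ℝ).prodCongr (MeasurableEquiv.toLp 2 _)

theorem measurePreserving_measurableEquivFinSucc (k : ℕ) :
    MeasurePreserving (measurableEquivFinSucc k) :=
  (volume_preserving_symm_measurableEquiv_toLp _).trans <|
    (volume_preserving_piFinSuccAbove (fun _ => ℝ) 0).trans <|
      (MeasurePreserving.id volume).prod (PiLp.volume_preserving_toLp _)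

@[simp]
theorem measurableEquivFinSucc_fst {k : ℕ} (x : EuclideanSpace ℝ (Fin (k + 1))) :
    (measurableEquivFinSucc k x).1 = x 0 := rfl

@[simp]
theorem measurableEquivFinSucc_snd {k : ℕ} (x : EuclideanSpace ℝ (Fin (k + 1))) (j : Fin k) :
    (measurableEquivFinSucc k x).2 j = x j.succ := rfl

theorem norm_sq_eq_fst_sq_add_norm_snd_sq {k : ℕ} (x : EuclideanSpace ℝ (Fin (k + 1))) :
    ‖x‖ ^ 2 = x 0 ^ 2 + ‖(measurableEquivFinSucc k x).2‖ ^ 2 := by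
  simp [real_norm_sq_eq, Fin.sum_univ_succ]

end EuclideanSpace

open EuclideanSpace

theorem mem_bodyOfRevolution_iff {k : ℕ} {hk : 0 < k + 1} {a b : ℝ} {f : ℝ → ℝ}
    {x : EuclideanSpace ℝ (Fin (k + 1))} :
    x ∈ bodyOfRevolution (k + 1) hk a b f ↔ x 0 ∈ Icc a b ∧ ‖x‖ ^ 2 ≤ x 0 ^ 2 + f (x 0) ^ 2 := by
  have hsum : ∑ i ∈ Finset.univ.filter (fun i : Fin (k + 1) => 0 < (i : ℕ)), x i ^ 2 =
      ‖x‖ ^ 2 - x 0 ^ 2 := by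
    rw [real_norm_sq_eq, Fin.sum_univ_succ, Finset.sum_filter, Fin.sum_univ_succ]
    simp
  rw [bodyOfRevolution, Set.mem_ofPred_eq, Fin.mk_zero, hsum, sub_le_iff_le_add']

theorem bodyOfRevolution_eq_preimage (k : ℕ) (a b : ℝ) (f : ℝ → ℝ) :
    bodyOfRevolution (k + 1) k.succ_pos a b f =
      measurableEquivFinSucc k ⁻¹' {p | p.1 ∈ Icc a b ∧ ‖p.2‖ ≤ |f p.1|} := by
  ext x
  rw [mem_bodyOfRevolution_iff, norm_sq_eq_fst_sq_add_norm_snd_sq, add_le_add_iff_left,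
    sq_le_sq, abs_norm]
  rfl

theorem volume_bodyOfRevolution (k : ℕ) {a b : ℝ} {f : ℝ → ℝ} (hf : ContinuousOn f (Ioo a b)) :
    volume (bodyOfRevolution (k + 1) k.succ_pos a b f) =
      ENNReal.ofReal (unitBallVolume k) * ∫⁻ t in Ioo a b, ‖f t‖ₑ ^ k := by
  rw [bodyOfRevolution_eq_preimage,
    (measurePreserving_measurableEquivFinSucc k).measure_preimage_equiv, Measure.volume_eq_prod,
    measure_congr (setOf_fst_mem_ae_eq _ Ioo_ae_eq_Icc.symm _),
    volume_prod_setOf_norm_le _ measurableSet_Ioo hf, ← lintegral_const_mul' _ _ ENNReal.ofReal_ne_top]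
  refine setLIntegral_congr_fun measurableSet_Ioo fun t _ => ?_
  rw [EuclideanSpace.volume_closedBall_fin k (abs_nonneg _), mul_comm, Real.enorm_eq_ofReal_abs]

theorem delCoord_apply {k : ℕ} (i : Fin (k + 1)) (x : EuclideanSpace ℝ (Fin (k + 1))) (j : Fin k) :
    delCoord i x j = x (i.succAbove j) := by
  simp only [delCoord, PiLp.toLp_apply, Fin.succAbove, Fin.lt_def, Fin.val_castSucc]
  split_ifs <;> rfl

theorem norm_sq_eq_sq_add_norm_delCoord_sq {k : ℕ} (i : Fin (k + 1))
    (x : EuclideanSpace ℝ (Fin (k + 1))) :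
    ‖x‖ ^ 2 = x i ^ 2 + ‖(delCoord i x : EuclideanSpace ℝ (Fin k))‖ ^ 2 := by
  simp only [real_norm_sq_eq, Fin.sum_univ_succAbove _ i, delCoord_apply]
  rfl

theorem delCoord_toLp_insertNth {k : ℕ} (i : Fin (k + 1)) (y : EuclideanSpace ℝ (Fin k)) :
    delCoord i (WithLp.toLp 2 (Fin.insertNth i 0 y)) = y := by
  ext j
  simp [delCoord_apply]

theorem norm_toLp_insertNth_zero {k : ℕ} (i : Fin (k + 1)) (y : EuclideanSpace ℝ (Fin k)) :
    ‖(WithLp.toLp 2 (Fin.insertNth i 0 y) : EuclideanSpace ℝ (Fin (k + 1)))‖ = ‖y‖ := by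
  rw [← sq_eq_sq₀ (norm_nonneg _) (norm_nonneg _), norm_sq_eq_sq_add_norm_delCoord_sq i,
    delCoord_toLp_insertNth]
  simp

theorem image_delCoord_bodyOfRevolution (k : ℕ) {i : Fin (k + 2)} (hi : i ≠ 0) (a b : ℝ)
    (f : ℝ → ℝ) :
    delCoord i '' bodyOfRevolution (k + 2) (by omega) a b f =
      bodyOfRevolution (k + 1) k.succ_pos a b f := by
  have hzero (x : EuclideanSpace ℝ (Fin (k + 2))) :
      delCoord i x (0 : Fin (k + 1)) = x 0 := by
    rw [delCoord_apply, Fin.succAbove_ne_zero_zero hi]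
  ext y
  constructor
  · rintro ⟨x, hx, rfl⟩
    rw [mem_bodyOfRevolution_iff] at hx ⊢
    have hnorm := norm_sq_eq_sq_add_norm_delCoord_sq i x
    rw [hzero]
    exact ⟨hx.1, by nlinarith [sq_nonneg (x i)]⟩
  · intro hy
    refine ⟨WithLp.toLp 2 (Fin.insertNth i 0 y), ?_, delCoord_toLp_insertNth i y⟩
    have h0 := hzero (WithLp.toLp 2 (Fin.insertNth i 0 y))
    rw [delCoord_toLp_insertNth] at h0
    rw [mem_bodyOfRevolution_iff] at hy ⊢
    rwa [← h0, norm_toLp_insertNth_zero]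

theorem delCoord23_eq_delCoord_delCoord {k : ℕ} (x : EuclideanSpace ℝ (Fin (k + 3))) :
    delCoord23 x = delCoord (1 : Fin (k + 2)) (delCoord (1 : Fin (k + 3)) x) := by
  ext j
  simp only [delCoord23, delCoord, PiLp.toLp_apply]
  split_ifs <;> first | rfl | simp_all

theorem image_delCoord23_bodyOfRevolution (k : ℕ) (a b : ℝ) (f : ℝ → ℝ) :
    delCoord23 '' bodyOfRevolution (k + 3) (by omega) a b f =
      bodyOfRevolution (k + 1) k.succ_pos a b f := by
  rw [funext delCoord23_eq_delCoord_delCoord, ← Set.image_image,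
    image_delCoord_bodyOfRevolution (k + 1) one_ne_zero, image_delCoord_bodyOfRevolution k one_ne_zero]

theorem lintegral_pow_succ_sq_le {α : Type*} [MeasurableSpace α] {μ : Measure α} {F : α → ℝ≥0∞}
    (hF : AEMeasurable F μ) (k : ℕ) :
    (∫⁻ x, F x ^ (k + 1) ∂μ) ^ 2 ≤ (∫⁻ x, F x ^ k ∂μ) * ∫⁻ x, F x ^ (k + 2) ∂μ := by
  have h := ENNReal.lintegral_mul_norm_pow_le (hF.pow_const k) (hF.pow_const (k + 2))
    (p := 2⁻¹) (q := 2⁻¹) (by norm_num) (by norm_num) (by norm_num)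
  have hmid (x : α) : (F x ^ k) ^ (2⁻¹ : ℝ) * (F x ^ (k + 2)) ^ (2⁻¹ : ℝ) = F x ^ (k + 1) := by
    rw [← ENNReal.mul_rpow_of_nonneg _ _ (by norm_num), ← pow_add,
      show k + (k + 2) = (k + 1) * 2 by ring, pow_mul]
    exact_mod_cast ENNReal.pow_rpow_inv_natCast two_ne_zero (F x ^ (k + 1))
  simp only [hmid] at h
  calc (∫⁻ x, F x ^ (k + 1) ∂μ) ^ 2
      ≤ ((∫⁻ x, F x ^ k ∂μ) ^ (2⁻¹ : ℝ) * (∫⁻ x, F x ^ (k + 2) ∂μ) ^ (2⁻¹ : ℝ)) ^ 2 := by gcongr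
    _ = (∫⁻ x, F x ^ k ∂μ) * ∫⁻ x, F x ^ (k + 2) ∂μ := by
      rw [mul_pow]
      congr 1 <;> exact_mod_cast ENNReal.rpow_inv_natCast_pow two_ne_zero _

theorem ConcaveOn.le_two_mul_apply_midpoint {a b : ℝ} {f : ℝ → ℝ}
    (hf : ConcaveOn ℝ (Icc a b) f) (hpos : ∀ t ∈ Icc a b, 0 ≤ f t) {t : ℝ} (ht : t ∈ Icc a b) :
    f t ≤ 2 * f ((a + b) / 2) := by
  have hs : a + b - t ∈ Icc a b := ⟨by linarith [ht.2], by linarith [ht.1]⟩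
  have h := hf.2 ht hs (by norm_num : (0 : ℝ) ≤ 1 / 2) (by norm_num : (0 : ℝ) ≤ 1 / 2) (by norm_num)
  rw [smul_eq_mul, smul_eq_mul, smul_eq_mul, smul_eq_mul,
    show 1 / 2 * t + 1 / 2 * (a + b - t) = (a + b) / 2 by ring] at h
  linarith [hpos _ hs]

theorem ConcaveOn.setLIntegral_enorm_pow_pos_ne_top {a b : ℝ} (hab : a < b) {f : ℝ → ℝ}
    (hf : ConcaveOn ℝ (Icc a b) f) (hpos : ∀ t ∈ Icc a b, 0 < f t) (k : ℕ) :
    0 < ∫⁻ t in Ioo a b, ‖f t‖ₑ ^ k ∧ ∫⁻ t in Ioo a b, ‖f t‖ₑ ^ k ≠ ∞ := by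
  have hbounds (t : ℝ) (ht : t ∈ Ioo a b) :
      ‖min (f a) (f b)‖ₑ ^ k ≤ ‖f t‖ₑ ^ k ∧ ‖f t‖ₑ ^ k ≤ ‖2 * f ((a + b) / 2)‖ₑ ^ k := by
    have ht' := Ioo_subset_Icc_self ht
    have hlow := hf.min_le_of_mem_Icc (left_mem_Icc.2 hab.le) (right_mem_Icc.2 hab.le) ht'
    have hup := hf.le_two_mul_apply_midpoint (fun s hs => (hpos s hs).le) ht'
    have hmin : 0 ≤ min (f a) (f b) :=
      le_min (hpos a (left_mem_Icc.2 hab.le)).le (hpos b (right_mem_Icc.2 hab.le)).le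
    rw [Real.enorm_of_nonneg hmin, Real.enorm_of_nonneg (hmin.trans hlow),
      Real.enorm_of_nonneg (hmin.trans (hlow.trans hup))]
    constructor <;> gcongr
  have hvol : volume (Ioo a b) = ENNReal.ofReal (b - a) := Real.volume_Ioo
  constructor
  · calc 0 < ‖min (f a) (f b)‖ₑ ^ k * volume (Ioo a b) := by
          have hmin := lt_min (hpos a (left_mem_Icc.2 hab.le)) (hpos b (right_mem_Icc.2 hab.le))
          rw [hvol]
          exact ENNReal.mul_pos (ENNReal.pow_pos (enorm_pos.2 hmin.ne') k).ne' (by simp [hab])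
      _ = ∫⁻ _ in Ioo a b, ‖min (f a) (f b)‖ₑ ^ k := (setLIntegral_const _ _).symm
      _ ≤ ∫⁻ t in Ioo a b, ‖f t‖ₑ ^ k := setLIntegral_mono' measurableSet_Ioo fun t ht => (hbounds t ht).1
  · refine (lt_of_le_of_lt (setLIntegral_mono' measurableSet_Ioo fun t ht => (hbounds t ht).2) ?_).ne
    rw [setLIntegral_const, hvol]
    exact ENNReal.mul_lt_top (ENNReal.pow_lt_top enorm_lt_top) ENNReal.ofReal_lt_top

/-- Proposition 4.1: for a rotation invariant convex body `K_f`, the projection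
inequality `(n/(n−1))·vol_{n−2}(K_f | (e₂,e₃)^⊥)·vol_n(K_f) > vol_{n−1}(K_f | e₂^⊥)·vol_{n−1}(K_f | e₃^⊥)`
holds. -/
theorem bodyOfRevolution_projection_inequality (n : ℕ) (hn : 3 ≤ n)
    (a b : ℝ) (hab : a < b) (f : ℝ → ℝ)
    (hconc : ConcaveOn ℝ (Set.Icc a b) f)
    (hpos : ∀ t ∈ Set.Icc a b, 0 < f t) :
    (volume (delCoord (⟨1, by omega⟩ : Fin n) ''
        bodyOfRevolution n (by omega) a b f)).toReal *
      (volume (delCoord (⟨2, by omega⟩ : Fin n) ''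
        bodyOfRevolution n (by omega) a b f)).toReal <
    ((n : ℝ) / ((n : ℝ) - 1)) *
      (volume (delCoord23 '' bodyOfRevolution n (by omega) a b f)).toReal *
      (volume (bodyOfRevolution n (by omega) a b f)).toReal := by
  obtain ⟨k, rfl⟩ : ∃ k, n = k + 3 := ⟨n - 3, by omega⟩
  have hcont : ContinuousOn f (Ioo a b) :=
    (hconc.subset Ioo_subset_Icc_self (convex_Ioo a b)).continuousOn isOpen_Ioo
  rw [image_delCoord_bodyOfRevolution (k + 1) (Fin.ne_of_val_ne one_ne_zero),
    image_delCoord_bodyOfRevolution (k + 1) (Fin.ne_of_val_ne two_ne_zero),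
    image_delCoord23_bodyOfRevolution, volume_bodyOfRevolution _ hcont,
    volume_bodyOfRevolution _ hcont, volume_bodyOfRevolution (k + 2) hcont]
  simp only [ENNReal.toReal_mul, ENNReal.toReal_ofReal (unitBallVolume_pos _).le]
  set J : ℕ → ℝ≥0∞ := fun j => ∫⁻ t in Ioo a b, ‖f t‖ₑ ^ j
  have hJ := hconc.setLIntegral_enorm_pow_pos_ne_top hab hpos
  have hmom : (J (k + 1)).toReal ^ 2 ≤ (J k).toReal * (J (k + 2)).toReal := by
    rw [← ENNReal.toReal_pow, ← ENNReal.toReal_mul]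
    exact ENNReal.toReal_mono (ENNReal.mul_ne_top (hJ k).2 (hJ _).2)
      (lintegral_pow_succ_sq_le (hcont.aemeasurable measurableSet_Ioo).enorm k)
  rw [show ((k + 3 : ℕ) : ℝ) / ((k + 3 : ℕ) - 1) = (k + 3) / (k + 2) by push_cast; ring, ← sq]
  exact unitBallVolume_mul_sq_lt k (ENNReal.toReal_pos (hJ k).1.ne' (hJ k).2)
    (ENNReal.toReal_pos (hJ (k + 2)).1.ne' (hJ (k + 2)).2) hmom
end

section
/- For every integer n ≥ 3, κ_{n−2}² < (n/(n−1)) · κ_{n−3} · κ_{n−1}, where κ_k denotes the k-dimensional Lebesgue volume of the unit Euclidean ball in ℝ^k (with κ₀ = 1). Equivalently, Γ(n/2)² > ((n−1)/n) · Γ((n−1)/2) · Γ((n+1)/2). -/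
open MeasureTheory

/-- `κ_k`, the volume of the `k`-dimensional unit Euclidean ball (with `κ₀ = 1`). -/
noncomputable def unitBallVol (k : ℕ) : ℝ :=
  (volume (Metric.closedBall (0 : EuclideanSpace ℝ (Fin k)) 1)).toReal

/-- Midpoint log-convexity of `Γ`: `Γ(z+1/2)² ≤ Γ(z)·Γ(z+1)`. -/
lemma gamma_midpoint_sq_le {z : ℝ} (hz : 0 < z) :
    Real.Gamma (z + 1/2) ^ 2 ≤ Real.Gamma z * Real.Gamma (z + 1) := by
  have h := Real.convexOn_log_Gamma.2 (Set.mem_Ioi.mpr hz)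
    (Set.mem_Ioi.mpr (by linarith : (0:ℝ) < z + 1))
    (by norm_num : (0:ℝ) ≤ 1/2) (by norm_num : (0:ℝ) ≤ 1/2) (by norm_num)
  simp only [smul_eq_mul, Function.comp_apply] at h
  rw [show (1/2 : ℝ) * z + 1/2 * (z+1) = z + 1/2 by ring] at h
  have hgz := Real.Gamma_pos_of_pos hz
  have hgz1 := Real.Gamma_pos_of_pos (by linarith : (0:ℝ) < z + 1)
  have hgm := Real.Gamma_pos_of_pos (by linarith : (0:ℝ) < z + 1/2)
  have h2 : 2 * Real.log (Real.Gamma (z + 1/2)) ≤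
      Real.log (Real.Gamma z) + Real.log (Real.Gamma (z + 1)) := by linarith
  have := Real.exp_le_exp.mpr h2
  rwa [Real.exp_add, Real.exp_log hgz, Real.exp_log hgz1, two_mul, Real.exp_add,
    Real.exp_log hgm, ← pow_two] at this

/-- Strict inequality: `Γ(y+1/2)² < y·Γ(y)²` for `y > 0`. -/
lemma gamma_add_half_sq_lt {y : ℝ} (hy : 0 < y) :
    Real.Gamma (y + 1/2) ^ 2 < y * Real.Gamma y ^ 2 := by
  have h := gamma_midpoint_sq_le (z := y + 1) (by linarith)
  rw [show y + 1 + 1/2 = (y + 1/2) + 1 by ring,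
    Real.Gamma_add_one (by positivity : y + (1:ℝ)/2 ≠ 0),
    show y + 1 + 1 = (y + 1) + 1 from rfl,
    Real.Gamma_add_one (by positivity : y + (1:ℝ) ≠ 0),
    Real.Gamma_add_one (ne_of_gt hy)] at h
  have hgy := Real.Gamma_pos_of_pos hy
  have hpos : (0:ℝ) < (y + 1/2)^2 := by positivity
  have h2 : (y + 1/2)^2 * (Real.Gamma (y + 1/2)^2) < (y + 1/2)^2 * (y * Real.Gamma y ^ 2) := by
    nlinarith [mul_pos hy (pow_pos hgy 2)]
  exact lt_of_mul_lt_mul_left h2 hpos.le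

open Real

lemma unitBallVol_eq (k : ℕ) :
    unitBallVol k = Real.sqrt π ^ k / Real.Gamma ((k : ℝ)/2 + 1) := by
  cases k with
  | zero =>
      have huniv : (Metric.closedBall (0 : EuclideanSpace ℝ (Fin 0)) 1) = Set.univ := by
        ext x
        simp [Subsingleton.elim x 0]
      have h0 : (volume (Set.univ : Set (EuclideanSpace ℝ (Fin 0)))) = 1 := by
        rw [← ((EuclideanSpace.volume_preserving_symm_measurableEquiv_toLp (Fin 0)).symm).measure_preimage
          MeasurableSet.univ.nullMeasurableSet]
        simp [MeasureTheory.volume_pi, MeasureTheory.Measure.pi_univ]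
      simp [unitBallVol, huniv, h0, Real.Gamma_one]
  | succ m =>
      have h := EuclideanSpace.volume_closedBall (ι := Fin (m+1)) 0 1
      rw [unitBallVol, h]
      have hΓ : 0 < Real.Gamma ((Fintype.card (Fin (m+1)) : ℝ)/2 + 1) := by
        apply Real.Gamma_pos_of_pos; positivity
      simp only [Fintype.card_fin] at *
      rw [ENNReal.ofReal_one, one_pow, one_mul, ENNReal.toReal_ofReal (by positivity)]

/-- For every `n ≥ 3`, `κ_{n−2}² < (n/(n−1))·κ_{n−3}·κ_{n−1}`; equivalently,
`Γ(n/2)² > ((n−1)/n)·Γ((n−1)/2)·Γ((n+1)/2)`. -/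
theorem unitBallVol_inequality (n : ℕ) (hn : 3 ≤ n) :
    unitBallVol (n - 2) ^ 2 <
      ((n : ℝ) / ((n : ℝ) - 1)) * unitBallVol (n - 3) * unitBallVol (n - 1) ∧
    Real.Gamma ((n : ℝ) / 2) ^ 2 >
      (((n : ℝ) - 1) / (n : ℝ)) * Real.Gamma (((n : ℝ) - 1) / 2) *
        Real.Gamma (((n : ℝ) + 1) / 2) := by
  obtain ⟨k, rfl⟩ : ∃ k, n = k + 3 := ⟨n - 3, by omega⟩
  set x : ℝ := (k : ℝ) / 2 with hx
  have hx0 : 0 ≤ x := by positivity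
  -- Gamma positivity
  have hG1 : 0 < Real.Gamma (x + 1) := Real.Gamma_pos_of_pos (by linarith)
  have hG32 : 0 < Real.Gamma (x + 3/2) := Real.Gamma_pos_of_pos (by linarith)
  have hG2 : 0 < Real.Gamma (x + 2) := Real.Gamma_pos_of_pos (by linarith)
  -- functional equation : Γ(x+2) = (x+1) Γ(x+1)
  have hfe : Real.Gamma (x + 2) = (x + 1) * Real.Gamma (x + 1) := by
    rw [show x + 2 = (x + 1) + 1 by ring, Real.Gamma_add_one (by positivity)]
  -- strict inequality at y = x + 3/2 : Γ(x+2)² < (x+3/2) Γ(x+3/2)²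
  have hstrict : Real.Gamma (x + 2) ^ 2 < (x + 3/2) * Real.Gamma (x + 3/2) ^ 2 := by
    have := gamma_add_half_sq_lt (y := x + 3/2) (by linarith)
    rwa [show x + 3/2 + 1/2 = x + 2 by ring] at this
  -- the key Gamma inequality
  have key : ((k:ℝ) + 2) * Real.Gamma (x + 1) * Real.Gamma (x + 2) <
      ((k:ℝ) + 3) * Real.Gamma (x + 3/2) ^ 2 := by
    have h2x : (k:ℝ) = 2 * x := by rw [hx]; ring
    have hA : ((k:ℝ) + 2) * Real.Gamma (x + 1) * Real.Gamma (x + 2) =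
        2 * Real.Gamma (x + 2) ^ 2 := by
      rw [hfe, h2x]; ring
    have hB : (k:ℝ) + 3 = 2 * (x + 3/2) := by rw [h2x]; ring
    rw [hA, hB]
    linarith [hstrict]
  constructor
  · -- volume form
    rw [show k + 3 - 2 = k + 1 by omega, show k + 3 - 3 = k by omega,
      show k + 3 - 1 = k + 2 by omega, unitBallVol_eq, unitBallVol_eq, unitBallVol_eq]
    have hargs1 : ((k+1 : ℕ) : ℝ)/2 + 1 = x + 3/2 := by push_cast [hx]; ring
    have hargs2 : ((k : ℕ) : ℝ)/2 + 1 = x + 1 := by push_cast [hx]; ring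
    have hargs3 : ((k+2 : ℕ) : ℝ)/2 + 1 = x + 2 := by push_cast [hx]; ring
    rw [hargs1, hargs2, hargs3]
    have hs : (0:ℝ) < Real.sqrt π ^ k := by
      positivity
    have hsp : (0:ℝ) < Real.sqrt π := Real.sqrt_pos.mpr Real.pi_pos
    have hP : (Real.sqrt π ^ (k+1)) ^ 2 = Real.sqrt π ^ k * Real.sqrt π ^ (k+2) := by
      rw [← pow_mul, ← pow_add]
      congr 1
      omega
    have hcast : ((k + 3 : ℕ) : ℝ) = (k:ℝ) + 3 := by push_cast; ring
    rw [hcast, div_pow, hP, show ((k:ℝ) + 3 - 1) = (k:ℝ) + 2 by ring,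
      div_mul_div_comm, div_mul_div_comm, div_lt_div_iff₀ (by positivity) (by positivity)]
    have hS : (0:ℝ) < Real.sqrt π ^ k * Real.sqrt π ^ (k+2) := by positivity
    nlinarith [mul_lt_mul_of_pos_right key hS]
  · -- Gamma form
    have hc : ((k + 3 : ℕ) : ℝ) = (k:ℝ) + 3 := by push_cast; ring
    rw [hc]
    have e1 : ((k:ℝ) + 3) / 2 = x + 3/2 := by rw [hx]; ring
    have e2 : (((k:ℝ) + 3) - 1) / 2 = x + 1 := by rw [hx]; ring
    have e3 : (((k:ℝ) + 3) + 1) / 2 = x + 2 := by rw [hx]; ring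
    rw [e1, e2, e3]
    rw [gt_iff_lt, show ((k:ℝ) + 3 - 1) = (k:ℝ) + 2 by ring, div_mul_eq_mul_div,
      div_mul_eq_mul_div, div_lt_iff₀ (by positivity : (0:ℝ) < (k:ℝ) + 3)]
    calc ((k:ℝ) + 2) * Real.Gamma (x+1) * Real.Gamma (x+2)
        < ((k:ℝ) + 3) * Real.Gamma (x + 3/2) ^ 2 := key
      _ = Real.Gamma (x + 3/2) ^ 2 * ((k:ℝ) + 3) := by ring
end

section
/- Let n ≥ 3, let a < b be real numbers, and let f : [a,b] → ℝ be continuous with f(t) > 0 for all t ∈ [a,b]. Then (κ_{n−2} ∫_a^b f(t)^{n−2} dt)² < (n/(n−1)) · (κ_{n−3} ∫_a^b f(t)^{n−3} dt) · (κ_{n−1} ∫_a^b f(t)^{n−1} dt). -/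
open MeasureTheory intervalIntegral

/-!
By Cauchy–Schwarz for the measure `f(t)^(n-3) dt`, `(∫ f^(n-2))² ≤ ∫ f^(n-3) · ∫ f^(n-1)`, so it
suffices that `κ_(k+1)² < (k+3)/(k+2) · κ_k κ_(k+2)`. Since `κ_(k+2)/κ_k = 2π/(k+2)` and the
Wallis integrals `W_j = ∫₀^π sin^j` satisfy `W_(k+2) W_(k+1) = 2π/(k+2)`, one has
`κ_(k+1) = W_(k+1) κ_k`, and the inequality becomes `W_(k+1) < (k+3)/(k+2) · W_(k+2)`. By the
reduction formula `W_(k+3) = (k+2)/(k+3) · W_(k+1)` this is the strict decrease `W_(k+3) < W_(k+2)`.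
-/

open Real Set

theorem sq_integral_mul_le_integral_mul_integral_mul_sq {α : Type*} [MeasurableSpace α]
    {μ : Measure α} {g h : α → ℝ} (hg : 0 ≤ᵐ[μ] g) (hg_int : Integrable g μ)
    (hgh_int : Integrable (fun x ↦ g x * h x) μ)
    (hgh2_int : Integrable (fun x ↦ g x * h x ^ 2) μ) :
    (∫ x, g x * h x ∂μ) ^ 2 ≤ (∫ x, g x ∂μ) * ∫ x, g x * h x ^ 2 ∂μ := by
  have hquad : ∀ c : ℝ, 0 ≤ (∫ x, g x ∂μ) * (c * c) + (-2 * ∫ x, g x * h x ∂μ) * c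
      + ∫ x, g x * h x ^ 2 ∂μ := by
    intro c
    have hnonneg : 0 ≤ ∫ x, g x * (h x - c) ^ 2 ∂μ :=
      integral_nonneg_of_ae (hg.mono fun x hx ↦ mul_nonneg hx (sq_nonneg _))
    have hexpand : ∫ x, g x * (h x - c) ^ 2 ∂μ
        = ∫ x, (g x * h x ^ 2 - (2 * c) * (g x * h x) + c ^ 2 * g x) ∂μ :=
      integral_congr_ae (Filter.Eventually.of_forall fun x ↦ by ring)
    rw [hexpand, integral_add (f := fun x ↦ g x * h x ^ 2 - 2 * c * (g x * h x))
      (hgh2_int.sub (hgh_int.const_mul _)) (hg_int.const_mul _),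
      integral_sub hgh2_int (hgh_int.const_mul _),
      MeasureTheory.integral_const_mul, MeasureTheory.integral_const_mul] at hnonneg
    linarith
  have := discrim_le_zero hquad
  unfold discrim at this
  linarith

theorem sq_integral_pow_succ_le {f : ℝ → ℝ} {a b : ℝ} (hab : a ≤ b)
    (hf : ContinuousOn f (Icc a b)) (hf_nonneg : ∀ t ∈ Icc a b, 0 ≤ f t) (k : ℕ) :
    (∫ t in a..b, f t ^ (k + 1)) ^ 2 ≤ (∫ t in a..b, f t ^ k) * ∫ t in a..b, f t ^ (k + 2) := by
  have hint (j : ℕ) : IntegrableOn (fun t ↦ f t ^ j) (Ioc a b) :=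
    ((hf.pow j).integrableOn_Icc).mono_set Ioc_subset_Icc_self
  have key := sq_integral_mul_le_integral_mul_integral_mul_sq (h := f)
    ((ae_restrict_iff' measurableSet_Ioc).2 (Filter.Eventually.of_forall fun t ht ↦
      pow_nonneg (hf_nonneg t (Ioc_subset_Icc_self ht)) k)) (hint k)
    (by simpa only [← pow_succ] using (hint (k + 1)).integrable)
    (by simpa only [← pow_add] using (hint (k + 2)).integrable)
  simpa only [integral_of_le hab, ← pow_succ, ← pow_add] using key

theorem integral_pow_pos {f : ℝ → ℝ} {a b : ℝ} (hab : a < b) (hf : ContinuousOn f (Icc a b))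
    (hf_pos : ∀ t ∈ Icc a b, 0 < f t) (k : ℕ) : 0 < ∫ t in a..b, f t ^ k :=
  integral_pos hab (hf.pow k) (fun t ht ↦ (pow_pos (hf_pos t (Ioc_subset_Icc_self ht)) k).le)
    ⟨a, left_mem_Icc.2 hab.le, pow_pos (hf_pos a (left_mem_Icc.2 hab.le)) k⟩

theorem unitBallVol_eq_sqrt_pi_pow_div_Gamma (k : ℕ) :
    unitBallVol k = √π ^ k / Gamma (k / 2 + 1) := by
  rcases k with _ | k
  · have hball : Metric.closedBall (0 : EuclideanSpace ℝ (Fin 0)) 1 = univ :=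
      eq_univ_of_forall fun x ↦ by simp [Subsingleton.elim x 0]
    rw [unitBallVol, hball, ← (PiLp.volume_preserving_toLp (Fin 0)).measure_preimage
      MeasurableSet.univ.nullMeasurableSet, preimage_univ, volume_pi, Measure.pi_univ]
    simp
  · rw [unitBallVol, EuclideanSpace.volume_closedBall, Fintype.card_fin, ENNReal.ofReal_one,
      one_pow, one_mul, ENNReal.toReal_ofReal (by positivity)]

theorem unitBallVol_pos (k : ℕ) : 0 < unitBallVol k := by
  rw [unitBallVol_eq_sqrt_pi_pow_div_Gamma]
  exact div_pos (pow_pos (sqrt_pos.2 pi_pos) k) (Gamma_pos_of_pos (by positivity))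

theorem unitBallVol_zero : unitBallVol 0 = 1 := by
  simp [unitBallVol_eq_sqrt_pi_pow_div_Gamma]

theorem unitBallVol_one : unitBallVol 1 = 2 := by
  rw [unitBallVol_eq_sqrt_pi_pow_div_Gamma, Nat.cast_one, Gamma_add_one (by norm_num),
    Gamma_one_half_eq]
  field_simp [(sqrt_pos.2 pi_pos).ne']

theorem unitBallVol_add_two (k : ℕ) :
    unitBallVol (k + 2) = 2 * π / (k + 2) * unitBallVol k := by
  have hk : (k : ℝ) / 2 + 1 ≠ 0 := by positivity
  rw [unitBallVol_eq_sqrt_pi_pow_div_Gamma, unitBallVol_eq_sqrt_pi_pow_div_Gamma, Nat.cast_add,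
    Nat.cast_two, show ((k : ℝ) + 2) / 2 + 1 = (k / 2 + 1) + 1 by ring, Gamma_add_one hk, pow_add,
    sq_sqrt pi_pos.le]
  field_simp

theorem integral_sin_pow_add_two_zero_pi (n : ℕ) :
    ∫ x in (0 : ℝ)..π, sin x ^ (n + 2) = (n + 1) / (n + 2) * ∫ x in (0 : ℝ)..π, sin x ^ n := by
  simp [integral_sin_pow]

theorem integral_sin_pow_succ_mul_integral_sin_pow (k : ℕ) :
    (∫ x in (0 : ℝ)..π, sin x ^ (k + 1)) * (∫ x in (0 : ℝ)..π, sin x ^ k) = 2 * π / (k + 1) := by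
  induction k with
  | zero => norm_num
  | succ k ih =>
    rw [integral_sin_pow_add_two_zero_pi, mul_right_comm, mul_assoc, ih]
    push_cast
    field_simp
    ring

theorem integral_sin_pow_succ_lt (k : ℕ) :
    ∫ x in (0 : ℝ)..π, sin x ^ (k + 1) < ∫ x in (0 : ℝ)..π, sin x ^ k := by
  refine integral_lt_integral_of_continuousOn_of_le_of_exists_lt pi_pos
    (continuous_sin.pow _).continuousOn (continuous_sin.pow _).continuousOn
    (fun x hx ↦ pow_le_pow_of_le_one (sin_nonneg_of_mem_Icc (Ioc_subset_Icc_self hx))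
      (sin_le_one x) k.le_succ) ⟨π / 6, ⟨by positivity, by linarith [pi_pos]⟩, ?_⟩
  rw [sin_pi_div_six]
  exact pow_lt_pow_right_of_lt_one₀ (by norm_num) (by norm_num) k.lt_succ_self

theorem unitBallVol_succ (k : ℕ) :
    unitBallVol (k + 1) = (∫ x in (0 : ℝ)..π, sin x ^ (k + 1)) * unitBallVol k := by
  induction k with
  | zero => norm_num [unitBallVol_zero, unitBallVol_one]
  | succ k ih =>
    rw [unitBallVol_add_two, ih, ← mul_assoc, integral_sin_pow_succ_mul_integral_sin_pow]
    push_cast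
    ring

theorem sq_unitBallVol_succ_lt (k : ℕ) :
    unitBallVol (k + 1) ^ 2 < (k + 3) / (k + 2) * unitBallVol k * unitBallVol (k + 2) := by
  set W₁ := ∫ x in (0 : ℝ)..π, sin x ^ (k + 1)
  set W₂ := ∫ x in (0 : ℝ)..π, sin x ^ (k + 2)
  have hW : W₁ < (k + 3) / (k + 2) * W₂ := by
    have h : ((k : ℝ) + 2) / (k + 3) * W₁ < W₂ := by
      have h := integral_sin_pow_succ_lt (k + 2)
      rw [integral_sin_pow_add_two_zero_pi] at h
      convert h using 2
      push_cast
      ring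
    calc W₁ = (k + 3) / (k + 2) * ((k + 2) / (k + 3) * W₁) := by field_simp
      _ < (k + 3) / (k + 2) * W₂ := by gcongr
  have hW₁κ : 0 < W₁ * unitBallVol k ^ 2 :=
    mul_pos (integral_sin_pow_pos _) (pow_pos (unitBallVol_pos k) 2)
  calc unitBallVol (k + 1) ^ 2 = W₁ * (W₁ * unitBallVol k ^ 2) := by
        rw [unitBallVol_succ]; ring
    _ < (k + 3) / (k + 2) * W₂ * (W₁ * unitBallVol k ^ 2) := by gcongr
    _ = (k + 3) / (k + 2) * unitBallVol k * unitBallVol (k + 2) := by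
        rw [unitBallVol_succ (k + 1), unitBallVol_succ k]; ring

/-- For `n ≥ 3` and a positive continuous `f` on `[a,b]` with `a < b`:
`(κ_{n−2}∫f^{n−2})² < (n/(n−1))·(κ_{n−3}∫f^{n−3})·(κ_{n−1}∫f^{n−1})`. -/
theorem integral_power_inequality (n : ℕ) (hn : 3 ≤ n) (a b : ℝ) (hab : a < b)
    (f : ℝ → ℝ) (hf : ContinuousOn f (Set.Icc a b))
    (hpos : ∀ t ∈ Set.Icc a b, 0 < f t) :
    (unitBallVol (n - 2) * ∫ t in a..b, f t ^ (n - 2)) ^ 2 <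
      ((n : ℝ) / ((n : ℝ) - 1)) * (unitBallVol (n - 3) * ∫ t in a..b, f t ^ (n - 3)) *
        (unitBallVol (n - 1) * ∫ t in a..b, f t ^ (n - 1)) := by
  obtain ⟨k, rfl⟩ : ∃ k, n = k + 3 := ⟨n - 3, by omega⟩
  rw [show k + 3 - 2 = k + 1 by omega, show k + 3 - 3 = k by omega,
    show k + 3 - 1 = k + 2 by omega, show ((k + 3 : ℕ) : ℝ) / ((k + 3 : ℕ) - 1) = (k + 3) / (k + 2)
      by push_cast; ring]
  have hCS := sq_integral_pow_succ_le hab.le hf (fun t ht ↦ (hpos t ht).le) k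
  have hBC := mul_pos (integral_pow_pos hab hf hpos k) (integral_pow_pos hab hf hpos (k + 2))
  calc (unitBallVol (k + 1) * ∫ t in a..b, f t ^ (k + 1)) ^ 2
      ≤ unitBallVol (k + 1) ^ 2 * ((∫ t in a..b, f t ^ k) * ∫ t in a..b, f t ^ (k + 2)) := by
        rw [mul_pow]; gcongr
    _ < (k + 3) / (k + 2) * unitBallVol k * unitBallVol (k + 2) *
          ((∫ t in a..b, f t ^ k) * ∫ t in a..b, f t ^ (k + 2)) := by
        gcongr; exact sq_unitBallVol_succ_lt k
    _ = _ := by ring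
end

section
/- Let D be a convex body in ℝⁿ with nonempty interior and let Δ ⊆ D be an n-dimensional simplex of maximal volume among all simplices contained in D. If the barycenter of Δ is at the origin, then D ⊆ −n·Δ, where −n·Δ = {−n·x : x ∈ Δ}. -/
open MeasureTheory Pointwise

/-!
If a barycentric coordinate `λᵢ(x)` of a point `x ∈ D` with respect to `Δ` had `|λᵢ(x)| > 1`,
replacing the vertex `pᵢ` by `x` would give a simplex in `D` of volume `|λᵢ(x)| · vol Δ`: it is the
image of `Δ` under the affine map `y ↦ y + λᵢ(y) (x - pᵢ)`, whose linear part is a transvection of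
determinant `λᵢ(x)`. Hence `λⱼ(x) ≤ 1` for all `j`, and as `∑ pⱼ = 0`,
`x = ∑ λⱼ(x) pⱼ = -∑ (1 - λⱼ(x)) pⱼ` with nonnegative weights `1 - λⱼ(x)` summing to `n`.
-/

section

variable {E : Type*} [NormedAddCommGroup E] [NormedSpace ℝ E] [MeasurableSpace E] [BorelSpace E]
  [FiniteDimensional ℝ E]

theorem MeasureTheory.Measure.addHaar_image_affineMap (μ : Measure E) [μ.IsAddHaarMeasure]
    (f : E →ᵃ[ℝ] E) (s : Set E) :
    μ (f '' s) = ENNReal.ofReal |LinearMap.det f.linear| * μ s := by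
  have hf : f '' s = f 0 +ᵥ f.linear '' s := by
    rw [← Set.image_vadd, Set.image_image]
    refine Set.image_congr fun y _ => ?_
    rw [vadd_eq_add, add_comm]
    exact congrFun f.decomp y
  rw [hf, measure_vadd, Measure.addHaar_image_linearMap]

end

theorem sum_smul_mem_sum_smul_convexHull {ι E : Type*} [Fintype ι] [Nonempty ι] [AddCommGroup E]
    [Module ℝ E] (p : ι → E) {w : ι → ℝ} (hw : ∀ j, 0 ≤ w j) :
    ∑ j, w j • p j ∈ (∑ j, w j) • convexHull ℝ (Set.range p) := by
  rcases (Finset.sum_nonneg fun j _ => hw j).eq_or_lt with hzero | hpos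
  · have hw0 : ∀ j, w j = 0 := fun j =>
      (Finset.sum_eq_zero_iff_of_nonneg fun j _ => hw j).mp hzero.symm j (Finset.mem_univ j)
    rw [← hzero, Set.zero_smul_set (Set.range_nonempty p).convexHull]
    simp [hw0]
  · rw [Set.mem_smul_set_iff_inv_smul_mem₀ hpos.ne']
    exact Finset.univ.centerMass_mem_convexHull (fun j _ => hw j) hpos
      (fun j _ => Set.mem_range_self j)

namespace AffineBasis

section

variable {ι E : Type*} [AddCommGroup E] [Module ℝ E]

noncomputable def replaceVertex (b : AffineBasis ι ℝ E) (i : ι) (x : E) : E →ᵃ[ℝ] E where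
  toFun y := y + b.coord i y • (x - b i)
  linear := LinearMap.transvection (b.coord i).linear (x - b i)
  map_vadd' y v := by
    rw [(b.coord i).map_vadd]
    simp only [vadd_eq_add, LinearMap.transvection.apply, add_smul]
    abel

theorem replaceVertex_comp [DecidableEq ι] (b : AffineBasis ι ℝ E) (i : ι) (x : E) :
    b.replaceVertex i x ∘ b = Function.update b i x := by
  ext1 j
  rcases eq_or_ne j i with rfl | hj
  · simp [replaceVertex]
  · simp [replaceVertex, b.coord_apply_ne hj.symm, hj]

theorem det_replaceVertex_linear [FiniteDimensional ℝ E] (b : AffineBasis ι ℝ E) (i : ι) (x : E) :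
    LinearMap.det (b.replaceVertex i x).linear = b.coord i x := by
  have h := (b.coord i).map_vadd (b i) (x - b i)
  rw [vadd_eq_add, sub_add_cancel, coord_apply_eq, vadd_eq_add] at h
  simp only [replaceVertex, LinearMap.transvection.det]
  linarith

theorem mem_neg_smul_convexHull_of_coord_le_one {n : ℕ} (b : AffineBasis (Fin (n + 1)) ℝ E)
    (hb : ∑ j, b j = 0) {x : E} (hx : ∀ j, b.coord j x ≤ 1) :
    x ∈ (-(n : ℝ)) • convexHull ℝ (Set.range b) := by
  have hsum : ∑ j, (1 - b.coord j x) = n := by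
    simp [Finset.sum_sub_distrib, b.sum_coord_apply_eq_one]
  have hx_eq : x = -∑ j, (1 - b.coord j x) • b j := by
    simp [sub_smul, Finset.sum_sub_distrib, hb, b.linear_combination_coord_eq_self]
  rw [Set.neg_smul_set, Set.mem_neg, hx_eq, neg_neg, ← hsum]
  exact sum_smul_mem_sum_smul_convexHull b fun j => sub_nonneg.mpr (hx j)

end

section

variable {ι E : Type*} [NormedAddCommGroup E] [NormedSpace ℝ E] [FiniteDimensional ℝ E]

theorem affineIndependent_update [DecidableEq ι] (b : AffineBasis ι ℝ E) (i : ι) {x : E}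
    (hx : b.coord i x ≠ 0) : AffineIndependent ℝ (Function.update b i x) := by
  rw [← replaceVertex_comp]
  refine b.ind.map' _ ((b.replaceVertex i x).linear_injective_iff.mp ?_)
  have hunit : IsUnit (b.replaceVertex i x).linear := by
    rw [LinearMap.isUnit_iff_isUnit_det, det_replaceVertex_linear]
    exact hx.isUnit
  exact ((Module.End.isUnit_iff _).mp hunit).injective

variable [MeasurableSpace E] [BorelSpace E] (μ : Measure E) [μ.IsAddHaarMeasure]

theorem addHaar_convexHull_update [DecidableEq ι] (b : AffineBasis ι ℝ E) (i : ι) (x : E) :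
    μ (convexHull ℝ (Set.range (Function.update b i x)))
      = ENNReal.ofReal |b.coord i x| * μ (convexHull ℝ (Set.range b)) := by
  rw [← replaceVertex_comp, Set.range_comp, ← AffineMap.image_convexHull,
    Measure.addHaar_image_affineMap, det_replaceVertex_linear]

theorem abs_coord_le_one_of_maximal_volume [Fintype ι] {D : Set E} (hD : Convex ℝ D)
    (b : AffineBasis ι ℝ E) (hsub : convexHull ℝ (Set.range b) ⊆ D)
    (hmax : ∀ q : ι → E, AffineIndependent ℝ q → convexHull ℝ (Set.range q) ⊆ D →
      μ (convexHull ℝ (Set.range q)) ≤ μ (convexHull ℝ (Set.range b)))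
    {x : E} (hx : x ∈ D) (i : ι) : |b.coord i x| ≤ 1 := by
  classical
  by_contra! hlt
  have hq_sub : convexHull ℝ (Set.range (Function.update b i x)) ⊆ D := by
    refine convexHull_min ?_ hD
    rintro _ ⟨j, rfl⟩
    rcases eq_or_ne j i with rfl | hj
    · simpa using hx
    · simpa [hj] using hsub (subset_convexHull ℝ _ ⟨j, rfl⟩)
  have hpos : μ (convexHull ℝ (Set.range b)) ≠ 0 :=
    (Measure.measure_pos_of_nonempty_interior μ ⟨_, b.centroid_mem_interior_convexHull⟩).ne'
  have hfin : μ (convexHull ℝ (Set.range b)) ≠ ⊤ :=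
    ((Set.finite_range b).isCompact_convexHull ℝ).measure_lt_top.ne
  have hle := hmax _ (b.affineIndependent_update i (abs_pos.mp (one_pos.trans hlt))) hq_sub
  rw [addHaar_convexHull_update] at hle
  refine hle.not_gt ?_
  simpa using ENNReal.mul_lt_mul_left hpos hfin (ENNReal.one_lt_ofReal.mpr hlt)

end

end AffineBasis

theorem maximal_simplex_contains_general (n : ℕ)
    (D : Set (EuclideanSpace ℝ (Fin n)))
    (hD : D.Nonempty ∧ IsCompact D ∧ Convex ℝ D)
    (p : Fin (n + 1) → EuclideanSpace ℝ (Fin n))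
    (hp : AffineIndependent ℝ p)
    (hsub : convexHull ℝ (Set.range p) ⊆ D)
    (hmax : ∀ q : Fin (n + 1) → EuclideanSpace ℝ (Fin n), AffineIndependent ℝ q →
      convexHull ℝ (Set.range q) ⊆ D →
      volume (convexHull ℝ (Set.range q)) ≤ volume (convexHull ℝ (Set.range p)))
    (hbary : ∑ i, p i = 0) :
    D ⊆ (-(n : ℝ)) • convexHull ℝ (Set.range p) := by
  let b : AffineBasis (Fin (n + 1)) ℝ (EuclideanSpace ℝ (Fin n)) :=
    ⟨p, hp, by rw [hp.affineSpan_eq_top_iff_card_eq_finrank_add_one]; simp⟩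
  intro x hx
  refine b.mem_neg_smul_convexHull_of_coord_le_one hbary fun i => ?_
  exact (abs_le.mp (b.abs_coord_le_one_of_maximal_volume volume hD.2.2 hsub hmax hx i)).2

/-- If `Δ ⊆ D` is a simplex of maximal volume among all simplices contained in the
convex body `D ⊂ ℝⁿ`, and the barycenter of `Δ` is at the origin, then `D ⊆ −n·Δ`. -/
theorem maximal_simplex_contains (n : ℕ)
    (D : Set (EuclideanSpace ℝ (Fin n)))
    (hD : D.Nonempty ∧ IsCompact D ∧ Convex ℝ D)
    (hDint : (interior D).Nonempty)
    (p : Fin (n + 1) → EuclideanSpace ℝ (Fin n))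
    (hp : AffineIndependent ℝ p)
    (hsub : convexHull ℝ (Set.range p) ⊆ D)
    (hmax : ∀ q : Fin (n + 1) → EuclideanSpace ℝ (Fin n), AffineIndependent ℝ q →
      convexHull ℝ (Set.range q) ⊆ D →
      volume (convexHull ℝ (Set.range q)) ≤ volume (convexHull ℝ (Set.range p)))
    (hbary : ∑ i, p i = 0) :
    D ⊆ (-(n : ℝ)) • convexHull ℝ (Set.range p) :=
  maximal_simplex_contains_general n D hD p hp hsub hmax hbary
end

section
/- Let 1 ≤ r ≤ n−1, let Q^r = [−1,1]^r ⊂ ℝ^r be the cube, let O^{n−r} = {y ∈ ℝ^{n−r} : |y₁| + ⋯ + |y_{n−r}| ≤ 1} be the cross-polytope, and let D ⊂ ℝⁿ = ℝ^r × ℝ^{n−r} be the convex hull of (Q^r × {0}) ∪ ({0} × O^{n−r}). Then vol_n(D) = 2ⁿ·r!/n!, vol_{n−1}(P_i(D)) = 2^{n−1}·(r−1)!/(n−1)! for every 1 ≤ i ≤ r, and vol_{n−r}(P_{[r]}(D)) = 2^{n−r}/(n−r)!; consequently (n/r)^r · binom(n,r)^{−1} · vol_{n−r}(P_{[r]}(D))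 · vol_n(D)^{r−1} = ∏_{i=1}^{r} vol_{n−1}(P_i(D)), i.e., D attains equality in the projection inequality of Lemma 5.5. -/
open MeasureTheory

/-- Coordinate projection deleting the first `r` coordinates. -/
noncomputable def delFirst {n : ℕ} (r : ℕ) (x : EuclideanSpace ℝ (Fin n)) :
    EuclideanSpace ℝ (Fin (n - r)) :=
  WithLp.toLp 2 fun j => x ⟨(j : ℕ) + r, by have := j.2; omega⟩

/-- The cube `Q^r × {0} ⊂ ℝⁿ` (first `r` coordinates in `[−1,1]`, the rest zero). -/
def cubeSlice (n r : ℕ) : Set (EuclideanSpace ℝ (Fin n)) :=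
  {x | (∀ i : Fin n, (i : ℕ) < r → |x i| ≤ 1) ∧ ∀ i : Fin n, r ≤ (i : ℕ) → x i = 0}

/-- The cross-polytope `{0} × O^{n−r} ⊂ ℝⁿ` (first `r` coordinates zero, the rest in
the `(n−r)`-dimensional octahedron). -/
def octSlice (n r : ℕ) : Set (EuclideanSpace ℝ (Fin n)) :=
  {x | (∀ i : Fin n, (i : ℕ) < r → x i = 0) ∧
    ∑ i ∈ Finset.univ.filter (fun i : Fin n => r ≤ (i : ℕ)), |x i| ≤ 1}

open scoped Nat

/-!
Write `x = (y, z) ∈ ℝ^r × ℝ^(n-r)`, so that `tailNorm r x = ‖z‖₁` and `cubeCrossBody n r a` is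
the body `‖y‖_∞ + ‖z‖₁ ≤ a`. The convex hull `D` is this body for `a = 1`: the body is convex and
contains both generating sets, and conversely `x = (1 - t) • (y / (1 - t), 0) + t • (0, z / t)`
with `t = ‖z‖₁`. The slice of the body at a fixed last coordinate `s` is the same body with
`a - |s|` in one dimension less, so by Fubini and induction its volume is `2ⁿ r! / n! · aⁿ`.
Deleting a cube coordinate gives the body with `(n - 1, r - 1)`, deleting all cube coordinates
gives the cross-polytope (`r = 0`), and the projection identity is then arithmetic of factorials.
-/

section CubeCrossBody

variable {n : ℕ}

noncomputable def tailNorm (r : ℕ) (x : Fin n → ℝ) : ℝ :=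
  ∑ i ∈ Finset.univ.filter (fun i : Fin n => r ≤ (i : ℕ)), |x i|

-- The first condition is only needed when no coordinate has index `< r`.
def cubeCrossBody (n r : ℕ) (a : ℝ) : Set (Fin n → ℝ) :=
  {x | tailNorm r x ≤ a ∧ ∀ i : Fin n, (i : ℕ) < r → |x i| + tailNorm r x ≤ a}

variable {r : ℕ}

lemma tailNorm_nonneg (x : Fin n → ℝ) : 0 ≤ tailNorm r x :=
  Finset.sum_nonneg fun _ _ => abs_nonneg _

lemma convexOn_tailNorm : ConvexOn ℝ Set.univ (tailNorm r : (Fin n → ℝ) → ℝ) := by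
  refine ⟨convex_univ, fun x _ y _ a b ha hb _ => ?_⟩
  simp only [tailNorm, smul_eq_mul, Finset.mul_sum, ← Finset.sum_add_distrib]
  refine Finset.sum_le_sum fun i _ => ?_
  simpa [abs_mul, abs_of_nonneg ha, abs_of_nonneg hb] using abs_add_le (a * x i) (b * y i)

lemma convexOn_abs_apply (i : Fin n) : ConvexOn ℝ Set.univ (fun x : Fin n → ℝ => |x i|) :=
  (convexOn_norm convex_univ).comp_linearMap (LinearMap.proj i : (Fin n → ℝ) →ₗ[ℝ] ℝ)

lemma cubeCrossBody_eq_inter_iInter (a : ℝ) : cubeCrossBody n r a =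
    {x | tailNorm r x ≤ a} ∩ ⋂ (i : Fin n) (_ : (i : ℕ) < r), {x | |x i| + tailNorm r x ≤ a} := by
  ext x
  simp [cubeCrossBody]

lemma convex_cubeCrossBody (a : ℝ) : Convex ℝ (cubeCrossBody n r a) := by
  rw [cubeCrossBody_eq_inter_iInter]
  refine .inter (by simpa using convexOn_tailNorm.convex_le a) <| convex_iInter₂ fun i _ => ?_
  simpa using ((convexOn_abs_apply i).add convexOn_tailNorm).convex_le a

lemma cubeCrossBody_eq_empty {a : ℝ} (ha : a < 0) : cubeCrossBody n r a = ∅ :=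
  Set.eq_empty_of_forall_notMem fun x hx => (hx.1.trans_lt ha).not_ge (tailNorm_nonneg x)

lemma mem_cubeCrossBody_of_head_eq_zero {a : ℝ} {x : Fin n → ℝ}
    (hhead : ∀ i : Fin n, (i : ℕ) < r → x i = 0) (htail : tailNorm r x ≤ a) :
    x ∈ cubeCrossBody n r a :=
  ⟨htail, fun i hi => by simpa [hhead i hi] using htail⟩

lemma measurableSet_cubeCrossBody (a : ℝ) : MeasurableSet (cubeCrossBody n r a) := by
  have h : Measurable (tailNorm r : (Fin n → ℝ) → ℝ) :=
    Finset.measurable_sum _ fun i _ => (measurable_pi_apply i).abs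
  rw [cubeCrossBody_eq_inter_iInter]
  exact (measurableSet_le h measurable_const).inter <| .iInter fun i => .iInter fun _ =>
    measurableSet_le ((measurable_pi_apply i).abs.add h) measurable_const

end CubeCrossBody

section ConvexHull

variable {n r : ℕ}

lemma cubeSlice_subset_cubeCrossBody : cubeSlice n r ⊆ WithLp.ofLp ⁻¹' cubeCrossBody n r 1 := by
  rintro x ⟨hhead, htail⟩
  have h0 : tailNorm r (WithLp.ofLp x) = 0 :=
    Finset.sum_eq_zero fun i hi => by simp [htail i (Finset.mem_filter.1 hi).2]
  exact ⟨by simp [h0], fun i hi => by simpa [h0] using hhead i hi⟩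

lemma octSlice_subset_cubeCrossBody : octSlice n r ⊆ WithLp.ofLp ⁻¹' cubeCrossBody n r 1 :=
  fun _ hx => mem_cubeCrossBody_of_head_eq_zero hx.1 hx.2

/-- With `x / 0 = 0` the decomposition `x = (1 - t) • u + t • v` below needs no case split:
for `t = 1` the head of `x` vanishes, for `t = 0` its tail. -/
lemma cubeCrossBody_subset_convexHull :
    WithLp.ofLp ⁻¹' cubeCrossBody n r 1 ⊆ convexHull ℝ (cubeSlice n r ∪ octSlice n r) := by
  rintro x ⟨htail, hhead⟩
  set t := tailNorm r (WithLp.ofLp x)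
  have ht : 0 ≤ t := tailNorm_nonneg _
  let u : EuclideanSpace ℝ (Fin n) :=
    WithLp.toLp 2 fun i => if (i : ℕ) < r then x i / (1 - t) else 0
  let v : EuclideanSpace ℝ (Fin n) :=
    WithLp.toLp 2 fun i => if (i : ℕ) < r then 0 else x i / t
  have hu : u ∈ cubeSlice n r := by
    refine ⟨fun i hi => ?_, fun i hi => if_neg (by omega)⟩
    simp only [u, if_pos hi, abs_div, abs_of_nonneg (sub_nonneg.2 htail)]
    exact div_le_one_of_le₀ (by linarith [hhead i hi]) (sub_nonneg.2 htail)
  have hv : v ∈ octSlice n r := by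
    refine ⟨fun i hi => if_pos hi, ?_⟩
    calc ∑ i ∈ Finset.univ.filter (fun i : Fin n => r ≤ (i : ℕ)), |v i|
        = ∑ i ∈ Finset.univ.filter (fun i : Fin n => r ≤ (i : ℕ)), |x i| / t :=
          Finset.sum_congr rfl fun i hi => by
            simp [v, not_lt.2 (Finset.mem_filter.1 hi).2, abs_div, abs_of_nonneg ht]
      _ = t / t := by rw [← Finset.sum_div]; rfl
      _ ≤ 1 := div_self_le_one t
  have hx : x = (1 - t) • u + t • v := by
    ext i
    by_cases hi : (i : ℕ) < r
    · simp only [u, v, PiLp.add_apply, PiLp.smul_apply, hi, ↓reduceIte, smul_eq_mul, mul_zero,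
        add_zero]
      exact (mul_div_cancel_of_imp' fun h0 => abs_nonpos_iff.1 (by linarith [hhead i hi])).symm
    · have hxi : |x i| ≤ t := Finset.single_le_sum (f := fun j => |x j|)
        (fun j _ => abs_nonneg _) (Finset.mem_filter.2 ⟨Finset.mem_univ i, not_lt.1 hi⟩)
      simp only [u, v, PiLp.add_apply, PiLp.smul_apply, hi, ↓reduceIte, smul_eq_mul, mul_zero,
        zero_add]
      exact (mul_div_cancel_of_imp' fun h0 => abs_nonpos_iff.1 (h0 ▸ hxi)).symm
  have hmem := convex_convexHull ℝ (cubeSlice n r ∪ octSlice n r)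
    (subset_convexHull ℝ _ (Set.mem_union_left _ hu))
    (subset_convexHull ℝ _ (Set.mem_union_right _ hv)) (sub_nonneg.2 htail) ht (sub_add_cancel 1 t)
  rwa [← hx] at hmem

lemma convexHull_cubeSlice_union_octSlice :
    convexHull ℝ (cubeSlice n r ∪ octSlice n r) = WithLp.ofLp ⁻¹' cubeCrossBody n r 1 :=
  (convexHull_min (Set.union_subset cubeSlice_subset_cubeCrossBody octSlice_subset_cubeCrossBody)
    ((convex_cubeCrossBody 1).linear_preimage
      (WithLp.linearEquiv 2 ℝ (Fin n → ℝ)).toLinearMap)).antisymm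
    cubeCrossBody_subset_convexHull

end ConvexHull

lemma integral_sub_abs_pow {a : ℝ} (ha : 0 ≤ a) (N : ℕ) :
    ∫ s in -a..a, (a - |s|) ^ N = 2 * (a ^ (N + 1) / (N + 1)) := by
  have hcont : Continuous fun s : ℝ => (a - |s|) ^ N := by fun_prop
  have hhalf : ∫ s in (0 : ℝ)..a, (a - |s|) ^ N = a ^ (N + 1) / (N + 1) := by
    rw [intervalIntegral.integral_congr (g := fun s => (a - s) ^ N) fun s hs => by
        rw [abs_of_nonneg (Set.uIcc_of_le ha ▸ hs).1],
      intervalIntegral.integral_comp_sub_left (fun s => s ^ N)]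
    simp [integral_pow]
  rw [← intervalIntegral.integral_add_adjacent_intervals (b := 0)
      (hcont.intervalIntegrable _ _) (hcont.intervalIntegrable _ _), two_mul, ← hhalf]
  simpa using (intervalIntegral.integral_comp_neg (a := 0) (b := a) fun s => (a - |s|) ^ N).symm

lemma lintegral_Icc_ofReal_sub_abs_pow {a : ℝ} (ha : 0 ≤ a) (N : ℕ) :
    ∫⁻ s in Set.Icc (-a) a, ENNReal.ofReal ((a - |s|) ^ N) =
      ENNReal.ofReal (2 * (a ^ (N + 1) / (N + 1))) := by
  rw [← ofReal_integral_eq_lintegral_ofReal, integral_Icc_eq_integral_Ioc,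
    ← intervalIntegral.integral_of_le (by linarith), integral_sub_abs_pow ha]
  · exact (by fun_prop : Continuous fun s : ℝ => (a - |s|) ^ N).integrableOn_Icc
  · exact (ae_restrict_iff' measurableSet_Icc).2 <| ae_of_all _ fun s hs =>
      pow_nonneg (sub_nonneg.2 (abs_le.2 hs)) N

section Volume

variable {N r : ℕ}


lemma tailNorm_snoc (hr : r ≤ N) (y : Fin N → ℝ) (s : ℝ) :
    tailNorm r (Fin.snoc y s : Fin (N + 1) → ℝ) = tailNorm r y + |s| := by
  simp only [tailNorm, Finset.sum_filter, Fin.sum_univ_castSucc]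
  simp [hr]

lemma snoc_mem_cubeCrossBody (hr : r ≤ N) {a s : ℝ} {y : Fin N → ℝ} :
    (Fin.snoc y s : Fin (N + 1) → ℝ) ∈ cubeCrossBody (N + 1) r a ↔
      y ∈ cubeCrossBody N r (a - |s|) := by
  simp only [cubeCrossBody, Set.mem_ofPred_eq, tailNorm_snoc hr, Fin.forall_fin_succ',
    Fin.snoc_castSucc, Fin.val_castSucc, Fin.val_last, hr.not_gt, IsEmpty.forall_iff, and_true]
  constructor <;> rintro ⟨h1, h2⟩ <;> exact ⟨by linarith, fun i hi => by linarith [h2 i hi]⟩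

lemma cubeCrossBody_self {a : ℝ} (ha : 0 ≤ a) :
    cubeCrossBody r r a = Set.univ.pi fun _ => Set.Icc (-a) a := by
  have h0 (x : Fin r → ℝ) : tailNorm r x = 0 :=
    Finset.sum_eq_zero fun i hi => absurd i.2 (not_lt.2 (Finset.mem_filter.1 hi).2)
  ext x
  simp only [cubeCrossBody, Set.mem_ofPred_eq, h0, add_zero, Set.mem_pi,
    Set.mem_univ, true_implies, Set.mem_Icc, ← abs_le]
  exact ⟨fun h i => h.2 i i.2, fun h => ⟨ha, fun i _ => h i⟩⟩

lemma volume_cubeCrossBody_snoc (hr : r ≤ N) (a : ℝ) :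
    volume (cubeCrossBody (N + 1) r a) = ∫⁻ s, volume (cubeCrossBody N r (a - |s|)) := by
  have e := volume_preserving_piFinSuccAbove (fun _ : Fin (N + 1) => ℝ) (Fin.last N)
  rw [← e.symm.measure_preimage (measurableSet_cubeCrossBody a).nullMeasurableSet,
    Measure.volume_eq_prod, Measure.prod_apply]
  · congr with s
    congr 1 with y
    simpa [Fin.snocEquiv] using snoc_mem_cubeCrossBody hr
  · exact e.symm.measurable (measurableSet_cubeCrossBody a)

lemma volume_cubeCrossBody (r m : ℕ) {a : ℝ} (ha : 0 ≤ a) :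
    volume (cubeCrossBody (r + m) r a) =
      ENNReal.ofReal (2 ^ (r + m) * r ! / (r + m)! * a ^ (r + m)) := by
  induction m generalizing a with
  | zero =>
    rw [Nat.add_zero, cubeCrossBody_self ha, volume_pi_pi]
    simp only [Real.volume_Icc, sub_neg_eq_add, Finset.prod_const, Finset.card_univ,
      Fintype.card_fin]
    rw [← ENNReal.ofReal_pow (by linarith), mul_div_cancel_right₀ _ (by positivity), ← mul_pow,
      two_mul]
  | succ m ih =>
    set c : ℝ := 2 ^ (r + m) * r ! / (r + m)! with hc
    have hslice (s : ℝ) : volume (cubeCrossBody (r + m) r (a - |s|)) = (Set.Icc (-a) a).indicator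
        (fun s => ENNReal.ofReal c * ENNReal.ofReal ((a - |s|) ^ (r + m))) s := by
      by_cases hs : s ∈ Set.Icc (-a) a
      · rw [Set.indicator_of_mem hs, ih (sub_nonneg.2 (abs_le.2 hs)),
          ENNReal.ofReal_mul (by positivity)]
      · have hneg : a - |s| < 0 := by
          rw [Set.mem_Icc, ← abs_le, not_le] at hs
          linarith
        rw [Set.indicator_of_notMem hs, cubeCrossBody_eq_empty hneg, measure_empty]
    rw [← Nat.add_assoc, volume_cubeCrossBody_snoc (Nat.le_add_right r m)]
    simp_rw [hslice]
    rw [lintegral_indicator measurableSet_Icc, lintegral_const_mul' _ _ ENNReal.ofReal_ne_top,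
      lintegral_Icc_ofReal_sub_abs_pow ha, ← ENNReal.ofReal_mul (by positivity)]
    congr 1
    rw [hc, Nat.factorial_succ]
    push_cast
    field_simp
    ring

end Volume

section Projections

variable {n r : ℕ}

lemma volume_ofLp_preimage_cubeCrossBody (hrn : r ≤ n) :
    volume (WithLp.ofLp ⁻¹' cubeCrossBody n r 1 : Set (EuclideanSpace ℝ (Fin n))) =
      ENNReal.ofReal (2 ^ n * r ! / n !) := by
  obtain ⟨m, rfl⟩ := Nat.exists_eq_add_of_le hrn
  rw [(PiLp.volume_preserving_ofLp _).measure_preimage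
      (measurableSet_cubeCrossBody 1).nullMeasurableSet,
    volume_cubeCrossBody r m zero_le_one, one_pow, mul_one]

lemma val_succAbove_lt_iff {k : ℕ} {i : Fin (k + 1)} (hi : (i : ℕ) < r) (j : Fin k) :
    (i.succAbove j : ℕ) < r ↔ (j : ℕ) < r - 1 := by
  unfold Fin.succAbove
  split_ifs with h <;> simp only [Fin.lt_def, Fin.val_castSucc, Fin.val_succ] at h ⊢ <;> omega

lemma tailNorm_removeNth {k : ℕ} {i : Fin (k + 1)} (hi : (i : ℕ) < r) (x : Fin (k + 1) → ℝ) :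
    tailNorm (r - 1) (Fin.removeNth i x) = tailNorm r x := by
  simp only [tailNorm, Finset.sum_filter]
  rw [Fin.sum_univ_succAbove _ i, if_neg (by omega), zero_add]
  simp only [Fin.removeNth, ← not_lt, val_succAbove_lt_iff hi]

lemma mem_cubeCrossBody_iff_removeNth {k : ℕ} {i : Fin (k + 1)} (hi : (i : ℕ) < r) {a : ℝ}
    {x : Fin (k + 1) → ℝ} :
    x ∈ cubeCrossBody (k + 1) r a ↔
      |x i| + tailNorm (r - 1) (Fin.removeNth i x) ≤ a ∧
        Fin.removeNth i x ∈ cubeCrossBody k (r - 1) a := by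
  simp only [cubeCrossBody, Set.mem_ofPred_eq, Fin.forall_iff_succAbove i, tailNorm_removeNth hi,
    val_succAbove_lt_iff hi, hi, true_implies, Fin.removeNth]
  tauto

lemma delCoord_eq_removeNth {k : ℕ} (i : Fin (k + 1)) (x : EuclideanSpace ℝ (Fin (k + 1))) :
    WithLp.ofLp (delCoord i x) = Fin.removeNth i (WithLp.ofLp x) := by
  ext j
  simp only [delCoord, Fin.removeNth, Fin.succAbove, Fin.lt_def, Fin.val_castSucc]
  split_ifs <;> rfl

lemma image_delCoord_cubeCrossBody {i : Fin n} (hi : (i : ℕ) < r) (a : ℝ) :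
    delCoord i '' (WithLp.ofLp ⁻¹' cubeCrossBody n r a) =
      WithLp.ofLp ⁻¹' cubeCrossBody (n - 1) (r - 1) a := by
  obtain ⟨k, rfl⟩ : ∃ k, n = k + 1 := ⟨n - 1, by omega⟩
  ext y
  constructor
  · rintro ⟨x, hx, rfl⟩
    rw [Set.mem_preimage, delCoord_eq_removeNth]
    exact ((mem_cubeCrossBody_iff_removeNth hi).1 hx).2
  · intro hy
    refine ⟨WithLp.toLp 2 (Fin.insertNth i 0 (WithLp.ofLp y)), ?_, ?_⟩
    · refine (mem_cubeCrossBody_iff_removeNth hi).2 ?_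
      simpa using ⟨hy.1, hy⟩
    · apply WithLp.ofLp_injective
      rw [delCoord_eq_removeNth]
      simp

lemma tailNorm_delFirst (x : EuclideanSpace ℝ (Fin n)) :
    tailNorm 0 (WithLp.ofLp (delFirst r x)) = tailNorm r (WithLp.ofLp x) := by
  refine Finset.sum_bij' (fun j _ => ⟨j + r, by omega⟩)
    (fun i hi => ⟨i - r, by have := (Finset.mem_filter.1 hi).2; omega⟩) ?_ ?_ ?_ ?_ ?_ <;>
    simp_all [delFirst]

lemma image_delFirst_cubeCrossBody (a : ℝ) :
    delFirst r '' (WithLp.ofLp ⁻¹' cubeCrossBody n r a) =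
      WithLp.ofLp ⁻¹' cubeCrossBody (n - r) 0 a := by
  ext y
  constructor
  · rintro ⟨x, hx, rfl⟩
    exact ⟨(tailNorm_delFirst x).trans_le hx.1, fun i hi => absurd hi (Nat.not_lt_zero _)⟩
  · intro hy
    let x : EuclideanSpace ℝ (Fin n) := WithLp.toLp 2 fun k =>
      if h : r ≤ (k : ℕ) then y ⟨k - r, by omega⟩ else 0
    have hxy : delFirst r x = y := by
      ext j
      simp [delFirst, x]
    refine ⟨x, mem_cubeCrossBody_of_head_eq_zero (fun i hi => dif_neg (by omega)) ?_, hxy⟩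
    rw [← tailNorm_delFirst, hxy]
    exact hy.1

end Projections

lemma projection_equality_of_factorials {n r : ℕ} (hr : 1 ≤ r) (hrn : r ≤ n) :
    ((n : ℝ) / r) ^ r * ((n.choose r : ℝ))⁻¹ * (2 ^ (n - r) / (n - r)!) *
        (2 ^ n * r ! / n !) ^ (r - 1) =
      (2 ^ (n - 1) * (r - 1)! / (n - 1)!) ^ r := by
  obtain ⟨k, rfl⟩ := Nat.exists_eq_add_of_le' hr
  obtain ⟨m, rfl⟩ := Nat.exists_eq_add_of_le hrn
  rw [Nat.cast_choose ℝ hrn, Nat.add_sub_cancel_left, Nat.add_sub_cancel,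
    show k + 1 + m - 1 = k + m by omega, show k + 1 + m = k + m + 1 by omega,
    Nat.factorial_succ, Nat.factorial_succ]
  push_cast
  simp only [div_pow, mul_pow]
  field_simp
  ring

/-- Remark 5.6: `D = conv((Q^r × {0}) ∪ ({0} × O^{n−r}))` has
`vol_n(D) = 2ⁿ·r!/n!`, `vol_{n−1}(P_i(D)) = 2^{n−1}·(r−1)!/(n−1)!` for `1 ≤ i ≤ r`,
`vol_{n−r}(P_{[r]}(D)) = 2^{n−r}/(n−r)!`, and `D` attains equality in the projection
inequality of Lemma 5.5. -/
theorem cube_cross_polytope_equality (n r : ℕ) (hr : 1 ≤ r) (hrn : r + 1 ≤ n) :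
    (volume (convexHull ℝ (cubeSlice n r ∪ octSlice n r))).toReal =
        2 ^ n * (Nat.factorial r : ℝ) / (Nat.factorial n : ℝ) ∧
    (∀ i : Fin n, (i : ℕ) < r →
      (volume (delCoord i '' convexHull ℝ (cubeSlice n r ∪ octSlice n r))).toReal =
        2 ^ (n - 1) * (Nat.factorial (r - 1) : ℝ) / (Nat.factorial (n - 1) : ℝ)) ∧
    (volume (delFirst r '' convexHull ℝ (cubeSlice n r ∪ octSlice n r))).toReal =
        2 ^ (n - r) / (Nat.factorial (n - r) : ℝ) ∧
    ((n : ℝ) / (r : ℝ)) ^ r * ((n.choose r : ℝ))⁻¹ *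
        (volume (delFirst r '' convexHull ℝ (cubeSlice n r ∪ octSlice n r))).toReal *
        (volume (convexHull ℝ (cubeSlice n r ∪ octSlice n r))).toReal ^ (r - 1) =
      ∏ i : Fin r,
        (volume (delCoord (⟨(i : ℕ), by have := i.2; omega⟩ : Fin n) ''
          convexHull ℝ (cubeSlice n r ∪ octSlice n r))).toReal := by
  rw [convexHull_cubeSlice_union_octSlice]
  have hD : (volume (WithLp.ofLp ⁻¹' cubeCrossBody n r 1 : Set (EuclideanSpace ℝ (Fin n)))).toReal
      = 2 ^ n * r ! / n ! := by
    rw [volume_ofLp_preimage_cubeCrossBody (by omega), ENNReal.toReal_ofReal (by positivity)]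
  have hP (i : Fin n) (hi : (i : ℕ) < r) :
      (volume (delCoord i '' (WithLp.ofLp ⁻¹' cubeCrossBody n r 1))).toReal =
        2 ^ (n - 1) * (r - 1)! / (n - 1)! := by
    rw [image_delCoord_cubeCrossBody hi, volume_ofLp_preimage_cubeCrossBody (by omega),
      ENNReal.toReal_ofReal (by positivity)]
  have hPr : (volume (delFirst r '' (WithLp.ofLp ⁻¹' cubeCrossBody n r 1))).toReal =
      2 ^ (n - r) / (n - r)! := by
    rw [image_delFirst_cubeCrossBody, volume_ofLp_preimage_cubeCrossBody (Nat.zero_le _),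
      ENNReal.toReal_ofReal (by positivity), Nat.factorial_zero, Nat.cast_one, mul_one]
  refine ⟨hD, hP, hPr, ?_⟩
  rw [hD, hPr, Finset.prod_congr rfl fun i _ => hP _ i.2, Finset.prod_const, Finset.card_fin]
  exact projection_equality_of_factorials hr (by omega)
end
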